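/- Let G be a connected graph, not a 4-cycle, f ∈ 𝒮 (an automorphism of G respecting the chosen labelings x_i of the 2-cuts S_i = {x_i,y_i}, i.e., f(x_i) = x_{f(i)} for all i), and β ⊆ 𝒯_G. Then ι(f) ∘ ψ_β = ψ_{fβ} ∘ ι(f), where fβ is the image of β under the induced action of f on 𝒯_G. -/

import Mathlib

open scoped Classical symmDiff

variable {V : Type*}

/-- The `k`-token graph of `G`: vertices are the `k`-subsets of `V(G)`,
two being adjacent iff their symmetric difference is an edge of `G`. -/
def tokenGraph [DecidableEq V] (G : SimpleGraph V) (k : ℕ) :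
    SimpleGraph {A : Finset V // A.card = k} where
  Adj A B := ∃ a b : V, G.Adj a b ∧ (A.1 ∆ B.1) = {a, b}
  symm := by
    constructor
    rintro A B ⟨a, b, hab, h⟩
    exact ⟨a, b, hab, by rwa [symmDiff_comm]⟩
  loopless := by
    constructor
    rintro A ⟨a, b, hab, h⟩
    rw [symmDiff_self] at h
    exact (Finset.insert_ne_empty a {b}) h.symm

/-- `S` is a 2-cut with the same neighbours: a 2-element vertex set whose removal
disconnects `G` and whose two vertices have the same neighbours outside `S`. -/
def SameNbrCut (G : SimpleGraph V) (S : Finset V) : Prop :=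
  S.card = 2 ∧ ¬ (G.induce ((↑S : Set V)ᶜ)).Preconnected ∧
    ∀ x ∈ S, ∀ y ∈ S, ∀ v ∉ S, (G.Adj x v ↔ G.Adj y v)

/-- `A^S = (A \ S) ∪ (S \ A)`. -/
def tokenMove [DecidableEq V] (A S : Finset V) : Finset V := (A \ S) ∪ (S \ A)

/-- The connected components of `G \ S`. -/
abbrev delComp (G : SimpleGraph V) (S : Finset V) :=
  (G.induce ((↑S : Set V)ᶜ)).ConnectedComponent

/-- The distribution tuple of `A` over the components of `G \ S`. -/
noncomputable def compDist (G : SimpleGraph V) (S : Finset V) (A : Finset V)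
    (c : delComp G S) : ℕ :=
  {v : ((↑S : Set V)ᶜ : Set V) | (v : V) ∈ A ∧
    (G.induce ((↑S : Set V)ᶜ)).connectedComponentMk v = c}.ncard

/-- `T_S`: distribution tuples with `kᵢ ≤ nᵢ` summing to `k - 1`. -/
def TS (G : SimpleGraph V) (S : Finset V) (k : ℕ) : Set (delComp G S → ℕ) :=
  {t | (∀ c, t c ≤ c.supp.ncard) ∧ ∑ᶠ c, t c = k - 1}

/-- The map `φ_{S,α}` on `k`-subsets. -/
noncomputable def phiFun [DecidableEq V] (G : SimpleGraph V) (S : Finset V)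
    (α : Set (delComp G S → ℕ)) (A : Finset V) : Finset V :=
  if compDist G S A ∈ α then tokenMove A S else A

/-- The map `ψ_β`, the composition of the `φ_{Sᵢ,βᵢ}`. -/
noncomputable def psiFun [DecidableEq V] (G : SimpleGraph V) {q : ℕ}
    (S : Fin q → Finset V) (β : ∀ i, Set (delComp G (S i) → ℕ)) :
    Finset V → Finset V :=
  (List.ofFn (fun i => phiFun G (S i) (β i))).foldr (· ∘ ·) id

/-!
Transporting a single factor along `f` turns `φ_{Sᵢ,βᵢ}` into `φ_{S_{σ i},(fβ)_{σ i}}`, because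
`f` maps `A ∆ Sᵢ` to `f A ∆ S_{σ i}` and the distribution tuple of `f A` over the components of
`G \ S_{σ i}` is that of `A` read through `e i`. Hence `ι(f) ∘ ψ_β` is `ψ_{fβ} ∘ ι(f)` up to
the order of the factors, and it suffices that the factors commute on `k`-sets.

Two distinct same-neighbour 2-cuts `S`, `T` of a connected graph are disjoint, and the two
vertices of `T` lie in one component of `G \ S`: otherwise both cuts are forced to be the two
colour classes of a 4-cycle spanning `G`. A factor `φ_T` acting on a `k`-set `B` replaces `B` by
`B ∆ T` with `|B ∩ T| = 1` (the tuple sums to `k - 1`), which moves one token inside a single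
component of `G \ S`; so it leaves the tuple of `B` for `S` unchanged, and both orders of
`φ_S`, `φ_T` produce the same set.
-/

open Finset

namespace List

lemma apply_foldr_eq_foldr_map {ι κ α β : Type*} (F : α → β) {g : ι → α → α} {g' : κ → β → β}
    (σ : ι → κ) (h : ∀ i a, F (g i a) = g' (σ i) (F a)) (l : List ι) (a : α) :
    F (l.foldr g a) = (l.map σ).foldr g' (F a) := by
  induction l with
  | nil => rfl
  | cons i l ih => rw [foldr_cons, h, ih, map_cons, foldr_cons]

lemma foldr_comp_id_apply {ι α : Type*} (g : ι → α → α) (l : List ι) (a : α) :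
    (l.map g).foldr (· ∘ ·) id a = l.foldr g a := by
  induction l with
  | nil => rfl
  | cons i l ih => exact congrArg (g i) ih

lemma Perm.foldr_eq_of_commute_on {ι α : Type*} {g : ι → α → α} {p : α → Prop}
    (hp : ∀ i a, p a → p (g i a)) (hcomm : ∀ i j, i ≠ j → ∀ a, p a → g i (g j a) = g j (g i a))
    {l₁ l₂ : List ι} (h : l₁.Perm l₂) {a : α} (ha : p a) : l₁.foldr g a = l₂.foldr g a := by
  have hpl : ∀ l : List ι, p (l.foldr g a) := by
    intro l
    induction l with
    | nil => exact ha
    | cons i l ih => exact hp i _ ih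
  induction h with
  | nil => rfl
  | cons i _ ih => rw [foldr_cons, foldr_cons, ih]
  | swap i j l =>
    obtain rfl | hij := eq_or_ne i j
    · rfl
    · exact hcomm j i hij.symm _ (hpl l)
  | trans _ _ ih₁ ih₂ => exact ih₁.trans ih₂

end List

namespace Finset

lemma card_symmDiff_of_two_mul_card_inter [DecidableEq V] {B S : Finset V}
    (h : 2 * #(B ∩ S) = #S) : #(B ∆ S) = #B := by
  have hsymm : #(B ∆ S) = #(B \ S) + #(S \ B) :=
    card_union_of_disjoint disjoint_sdiff_sdiff
  have hB := card_sdiff_add_card_inter B S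
  have hS : #(S \ B) = #S - #(B ∩ S) := card_sdiff
  omega

lemma card_filter_symmDiff_of_two_mul_card_inter [DecidableEq V] {B S : Finset V} {p : V → Prop}
    [DecidablePred p] (hp : (∀ v ∈ S, p v) ∨ ∀ v ∈ S, ¬ p v) (h : 2 * #(B ∩ S) = #S) :
    #{v ∈ B ∆ S | p v} = #{v ∈ B | p v} := by
  rcases hp with hp | hp
  · have hfilter : {v ∈ B ∆ S | p v} = {v ∈ B | p v} ∆ S := by
      ext v; by_cases hv : v ∈ S <;> simp [mem_symmDiff, hv, hp v]
    have hinter : {v ∈ B | p v} ∩ S = B ∩ S := by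
      ext v; by_cases hv : v ∈ S <;> simp [hv, hp v]
    rw [hfilter, card_symmDiff_of_two_mul_card_inter (by rwa [hinter])]
  · congr 1
    ext v; by_cases hv : v ∈ S <;> simp [mem_symmDiff, hv, hp v]

end Finset

namespace SimpleGraph

lemma Preconnected.forall_of_adj_imp {G : SimpleGraph V} (hG : G.Preconnected) {P : V → Prop}
    (hP : ∀ u v, G.Adj u v → P u → P v) {u : V} (hu : P u) (v : V) : P v := by
  by_contra hv
  obtain ⟨d, -, hd₁, hd₂⟩ := (hG u v).some.exists_boundary_dart {w | P w} hu hv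
  exact hd₂ (hP _ _ d.adj hd₁)

lemma nonempty_iso_cycleGraph_four {G : SimpleGraph V} (hG : G.Preconnected) {x y a b : V}
    (hxy : x ≠ y) (hab : a ≠ b)
    (hx : ∀ v, G.Adj x v ↔ v = a ∨ v = b) (hy : ∀ v, G.Adj y v ↔ v = a ∨ v = b)
    (ha : ∀ v, G.Adj a v ↔ v = x ∨ v = y) (hb : ∀ v, G.Adj b v ↔ v = x ∨ v = y) :
    Nonempty (G ≃g cycleGraph 4) := by
  have hcover : ∀ v, v = x ∨ v = y ∨ v = a ∨ v = b := by
    refine hG.forall_of_adj_imp (fun u v huv hu => ?_) (u := x) (.inl rfl)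
    rcases hu with rfl | rfl | rfl | rfl
    · rcases (hx v).mp huv with h | h <;> simp [h]
    · rcases (hy v).mp huv with h | h <;> simp [h]
    · rcases (ha v).mp huv with h | h <;> simp [h]
    · rcases (hb v).mp huv with h | h <;> simp [h]
  have hxa : x ≠ a := G.ne_of_adj ((hx a).mpr (.inl rfl))
  have hxb : x ≠ b := G.ne_of_adj ((hx b).mpr (.inr rfl))
  have hya : y ≠ a := G.ne_of_adj ((hy a).mpr (.inl rfl))
  have hyb : y ≠ b := G.ne_of_adj ((hy b).mpr (.inr rfl))
  let g : Fin 4 → V := ![x, a, y, b]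
  have hg : g.Bijective := by
    refine ⟨fun i j hij => ?_, fun v => ?_⟩
    · fin_cases i <;> fin_cases j <;> simp_all [g, eq_comm]
    · rcases hcover v with rfl | rfl | rfl | rfl
      exacts [⟨0, rfl⟩, ⟨2, rfl⟩, ⟨1, rfl⟩, ⟨3, rfl⟩]
  refine ⟨RelIso.symm ⟨Equiv.ofBijective g hg, fun {i j} => ?_⟩⟩
  fin_cases i <;> fin_cases j <;>
    simp [g, hx, hy, ha, hb, cycleGraph_adj, hxy, hab, hxa, hxb, hya, hyb, hxy.symm, hab.symm,
      hxa.symm, hxb.symm, hya.symm, hyb.symm] <;> decide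

end SimpleGraph

section compDist

variable {G : SimpleGraph V} {S : Finset V}

lemma compDist_eq_card_filter [DecidableEq V] (A : Finset V) (c : delComp G S) :
    compDist G S A c =
      #{v ∈ A | ∃ h : v ∉ S, (G.induce ((↑S : Set V)ᶜ)).connectedComponentMk ⟨v, h⟩ = c} := by
  rw [compDist, ← Set.ncard_image_of_injective _ Subtype.val_injective, ← Set.ncard_coe_finset]
  congr 1
  ext v
  simp [and_comm]

lemma finsum_compDist [DecidableEq V] (B : Finset V) : ∑ᶠ c, compDist G S B c = #(B \ S) := by
  set B' := B.subtype (· ∈ (↑S : Set V)ᶜ)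
  have hfiber : ∀ c, compDist G S B c =
      #{v ∈ B' | (G.induce ((↑S : Set V)ᶜ)).connectedComponentMk v = c} := by
    intro c
    rw [compDist, ← Set.ncard_coe_finset]
    congr 1
    ext v
    simp [B']
  simp_rw [hfiber]
  rw [finsum_eq_sum_of_support_subset
      (s := B'.image (G.induce ((↑S : Set V)ᶜ)).connectedComponentMk),
    ← card_eq_sum_card_image, card_subtype]
  · congr 1
    ext v
    simp
  · intro c hc
    obtain ⟨v, hv⟩ := card_pos.mp (Nat.pos_of_ne_zero hc)
    obtain ⟨hvB, rfl⟩ := mem_filter.mp hv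
    exact mem_image_of_mem _ hvB

lemma compDist_symmDiff [DecidableEq V] {T B : Finset V}
    (hT : ∃ c : delComp G S, ∀ v ∈ T, ∃ h : v ∉ S,
      (G.induce ((↑S : Set V)ᶜ)).connectedComponentMk ⟨v, h⟩ = c)
    (h : 2 * #(B ∩ T) = #T) : compDist G S (B ∆ T) = compDist G S B := by
  obtain ⟨c₀, hc₀⟩ := hT
  funext c
  rw [compDist_eq_card_filter, compDist_eq_card_filter]
  refine card_filter_symmDiff_of_two_mul_card_inter ?_ h
  obtain rfl | hc := eq_or_ne c₀ c
  · exact Or.inl hc₀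
  · refine Or.inr fun v hv ⟨_, hvc⟩ => hc ?_
    obtain ⟨_, hvc₀⟩ := hc₀ v hv
    exact hvc₀.symm.trans hvc

lemma compDist_image {W : Type*} [DecidableEq W] {G' : SimpleGraph W} {S' : Finset W} (f : G ≃g G')
    (hS : S.image f = S') (e : delComp G S ≃ delComp G' S')
    (he : ∀ (v : V) (hv : v ∈ ((↑S : Set V))ᶜ) (hfv : f v ∈ ((↑S' : Set W))ᶜ),
      e ((G.induce ((↑S : Set V))ᶜ).connectedComponentMk ⟨v, hv⟩)
        = (G'.induce ((↑S' : Set W))ᶜ).connectedComponentMk ⟨f v, hfv⟩)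
    (A : Finset V) : compDist G' S' (A.image f) ∘ e = compDist G S A := by
  have hmem : ∀ v, f v ∈ S' ↔ v ∈ S := fun v => by
    rw [← hS, f.injective.mem_finset_image]
  funext c
  rw [Function.comp_apply, compDist_eq_card_filter, compDist_eq_card_filter, filter_image,
    card_image_of_injective _ f.injective]
  congr 1
  ext v
  simp only [mem_filter, and_congr_right_iff]
  intro _
  constructor
  · rintro ⟨hfv, hc⟩
    have hv : v ∉ S := fun hv => hfv ((hmem v).mpr hv)
    exact ⟨hv, e.injective ((he v hv hfv).trans hc)⟩
  · rintro ⟨hv, rfl⟩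
    have hfv : f v ∉ S' := fun hfv => hv ((hmem v).mp hfv)
    exact ⟨hfv, (he v hv hfv).symm⟩

end compDist

namespace SameNbrCut

open SimpleGraph

variable {G : SimpleGraph V} {S T : Finset V}

lemma adj_iff_adj (hS : SameNbrCut G S) {x y v : V} (hx : x ∈ S) (hy : y ∈ S) (hv : v ∉ S) :
    G.Adj x v ↔ G.Adj y v :=
  hS.2.2 x hx y hy v hv

lemma exists_eq_pair [DecidableEq V] (hS : SameNbrCut G S) {y : V} (hy : y ∈ S) :
    ∃ x, x ≠ y ∧ S = {x, y} := by
  obtain ⟨x, hx⟩ := card_eq_one.mp (show #(S.erase y) = 1 by rw [card_erase_of_mem hy, hS.1])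
  refine ⟨x, ne_of_mem_erase (hx ▸ mem_singleton_self x), ?_⟩
  rw [← insert_erase hy, hx, pair_comm]

lemma disjoint [DecidableEq V] (hG : G.Connected) (hS : SameNbrCut G S) (hT : SameNbrCut G T)
    (hne : S ≠ T) : Disjoint S T := by
  rw [disjoint_right]
  intro y hyT hyS
  obtain ⟨x', -, rfl⟩ := hT.exists_eq_pair hyT
  have hx'S : x' ∉ S := fun hx'S => hne (eq_of_subset_of_card_le
    (insert_subset hx'S (singleton_subset_iff.mpr hyS)) (by rw [hS.1, hT.1])).symm
  apply hS.2.1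
  suffices h : ∀ u (hu : u ∉ S), (G.induce ((↑S : Set V)ᶜ)).Reachable ⟨u, hu⟩ ⟨x', hx'S⟩ from
    fun u v => (h u u.2).trans (h v v.2).symm
  refine hG.preconnected.forall_of_adj_imp (fun u v huv hu hv => ?_) (u := y)
    (fun hy => absurd hyS hy)
  by_cases huS : u ∈ S
  · obtain rfl | hvx' := eq_or_ne v x'
    · exact Reachable.refl _
    -- `v` is a neighbour of `S`, hence of `y`, hence of `x'`
    have hvT : v ∉ ({x', y} : Finset V) := by
      simp only [mem_insert, mem_singleton, not_or]
      exact ⟨hvx', fun hvy => hv (hvy ▸ hyS)⟩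
    have hyv := (hS.adj_iff_adj huS hyS hv).mp huv
    have hx'v := (hT.adj_iff_adj (mem_insert_self x' _) hyT hvT).mpr hyv
    exact (show (G.induce ((↑S : Set V)ᶜ)).Adj ⟨v, hv⟩ ⟨x', hx'S⟩ from hx'v.symm).reachable
  · exact (show (G.induce ((↑S : Set V)ᶜ)).Adj ⟨v, hv⟩ ⟨u, huS⟩ from huv.symm).reachable.trans
      (hu huS)

lemma adj_iff_mem_of_not_reachable [DecidableEq V] (hG : G.Connected) {x y : V}
    (hS : SameNbrCut G {x, y}) (hT : SameNbrCut G T) (hxT : x ∉ T) (hyT : y ∉ T)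
    (hnr : ¬ (G.induce ((↑T : Set V)ᶜ)).Reachable ⟨x, hxT⟩ ⟨y, hyT⟩) (v : V) :
    G.Adj x v ↔ v ∈ T := by
  have hxy : x ≠ y := by
    rintro rfl
    exact hnr (Reachable.refl _)
  have hnbr : ∀ w, G.Adj x w → w ∈ T := by
    intro w hxw
    by_contra hwT
    apply hnr
    have hxw' : (G.induce ((↑T : Set V)ᶜ)).Adj ⟨x, hxT⟩ ⟨w, hwT⟩ := hxw
    by_cases hwS : w ∈ ({x, y} : Finset V)
    · obtain rfl | rfl : w = x ∨ w = y := by simpa using hwS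
      · exact absurd hxw (G.loopless.irrefl _)
      · exact hxw'.reachable
    · have hyw := (hS.adj_iff_adj (y := y) (mem_insert_self x _) (by simp) hwS).mp hxw
      exact hxw'.reachable.trans
        (show (G.induce ((↑T : Set V)ᶜ)).Adj ⟨w, hwT⟩ ⟨y, hyT⟩ from hyw.symm).reachable
  have : Nontrivial V := ⟨⟨x, y, hxy⟩⟩
  obtain ⟨w, hxw⟩ := hG.preconnected.exists_adj_of_nontrivial x
  exact ⟨hnbr v, fun hvT => ((hT.adj_iff_adj (hnbr w hxw) hvT hxT).mp hxw.symm).symm⟩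

lemma not_reachable_of_adj_iff_mem [DecidableEq V] (hG : G.Connected) {x y a b : V}
    (hS : SameNbrCut G {x, y}) (hx : ∀ v, G.Adj x v ↔ v ∈ ({a, b} : Finset V))
    (ha : a ∉ ({x, y} : Finset V)) (hb : b ∉ ({x, y} : Finset V)) :
    ¬ (G.induce ((↑({x, y} : Finset V) : Set V)ᶜ)).Reachable ⟨a, ha⟩ ⟨b, hb⟩ := by
  intro hab
  apply hS.2.1
  suffices h : ∀ u (hu : u ∉ ({x, y} : Finset V)),
      (G.induce ((↑({x, y} : Finset V) : Set V)ᶜ)).Reachable ⟨u, hu⟩ ⟨a, ha⟩ from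
    fun u v => (h u u.2).trans (h v v.2).symm
  refine hG.preconnected.forall_of_adj_imp (fun u v huv hu hv => ?_) (u := x)
    (fun hx' => absurd (mem_insert_self _ _) hx')
  by_cases huS : u ∈ ({x, y} : Finset V)
  · have hxv := (hS.adj_iff_adj (mem_insert_self x _) huS hv).mpr huv
    obtain rfl | rfl : v = a ∨ v = b := by simpa using (hx v).mp hxv
    · exact Reachable.refl _
    · exact hab.symm
  · exact (show (G.induce _).Adj ⟨v, hv⟩ ⟨u, huS⟩ from huv.symm).reachable.trans (hu huS)

lemma reachable_of_ne [DecidableEq V] (hG : G.Connected) (h4 : IsEmpty (G ≃g cycleGraph 4))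
    (hS : SameNbrCut G S) (hT : SameNbrCut G T) (hne : S ≠ T) {x y : V} (hx : x ∈ S)
    (hy : y ∈ S) (hxT : x ∉ T) (hyT : y ∉ T) :
    (G.induce ((↑T : Set V)ᶜ)).Reachable ⟨x, hxT⟩ ⟨y, hyT⟩ := by
  by_contra hnr
  have hxy : x ≠ y := by
    rintro rfl
    exact hnr (Reachable.refl _)
  obtain rfl : S = {x, y} := (eq_of_subset_of_card_le
    (insert_subset hx (singleton_subset_iff.mpr hy)) (by rw [hS.1, card_pair hxy])).symm
  obtain ⟨a, b, hab, rfl⟩ := card_eq_two.mp hT.1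
  have haS : a ∉ ({x, y} : Finset V) := disjoint_right.mp (hS.disjoint hG hT hne) (by simp)
  have hbS : b ∉ ({x, y} : Finset V) := disjoint_right.mp (hS.disjoint hG hT hne) (by simp)
  have hxN := adj_iff_mem_of_not_reachable hG hS hT hxT hyT hnr
  have hyN := adj_iff_mem_of_not_reachable hG (pair_comm x y ▸ hS) hT hyT hxT
    (fun h => hnr h.symm)
  have hnr' := not_reachable_of_adj_iff_mem hG hS hxN haS hbS
  have haN := adj_iff_mem_of_not_reachable hG hT hS haS hbS hnr'
  have hbN := adj_iff_mem_of_not_reachable hG (pair_comm a b ▸ hT) hS hbS haS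
    (fun h => hnr' h.symm)
  simp only [mem_insert, mem_singleton] at hxN hyN haN hbN
  exact h4.false (nonempty_iso_cycleGraph_four hG.preconnected hxy hab hxN hyN haN hbN).some

end SameNbrCut

section phiFun

open SimpleGraph

variable [DecidableEq V] {G : SimpleGraph V} {S T : Finset V}

lemma card_inter_eq_one_of_finsum_compDist {k : ℕ} (hk : 1 ≤ k) {B : Finset V} (hB : #B = k)
    (h : ∑ᶠ c, compDist G S B c = k - 1) : #(B ∩ S) = 1 := by
  rw [finsum_compDist] at h
  have := card_sdiff_add_card_inter B S
  omega

lemma card_phiFun {k : ℕ} (hk : 1 ≤ k) (hS : SameNbrCut G S) {α : Set (delComp G S → ℕ)}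
    (hα : ∀ t ∈ α, ∑ᶠ c, t c = k - 1) {B : Finset V} (hB : #B = k) :
    #(phiFun G S α B) = k := by
  unfold phiFun
  split_ifs with h
  · rw [tokenMove, ← Finset.symmDiff_def, ← hB]
    refine card_symmDiff_of_two_mul_card_inter ?_
    rw [card_inter_eq_one_of_finsum_compDist hk hB (hα _ h), hS.1]
  · exact hB

lemma compDist_symmDiff_of_sameNbrCut (hG : G.Connected) (h4 : IsEmpty (G ≃g cycleGraph 4))
    (hS : SameNbrCut G S) (hT : SameNbrCut G T) (hne : S ≠ T) {B : Finset V}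
    (hB : #(B ∩ T) = 1) : compDist G S (B ∆ T) = compDist G S B := by
  refine compDist_symmDiff ?_ (by rw [hB, hT.1])
  obtain ⟨x, y, -, rfl⟩ := card_eq_two.mp hT.1
  have hxS : x ∉ S := disjoint_right.mp (hS.disjoint hG hT hne) (by simp)
  have hyS : y ∉ S := disjoint_right.mp (hS.disjoint hG hT hne) (by simp)
  refine ⟨(G.induce ((↑S : Set V)ᶜ)).connectedComponentMk ⟨x, hxS⟩, fun v hv => ?_⟩
  obtain rfl | rfl : v = x ∨ v = y := by simpa using hv
  · exact ⟨hxS, rfl⟩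
  · exact ⟨hyS, (ConnectedComponent.sound
      (hT.reachable_of_ne hG h4 hS hne.symm (by simp) (by simp) hxS hyS)).symm⟩

lemma phiFun_comm (hG : G.Connected) (h4 : IsEmpty (G ≃g cycleGraph 4)) {k : ℕ} (hk : 1 ≤ k)
    (hS : SameNbrCut G S) (hT : SameNbrCut G T) (hne : S ≠ T)
    {α : Set (delComp G S → ℕ)} {γ : Set (delComp G T → ℕ)}
    (hα : ∀ t ∈ α, ∑ᶠ c, t c = k - 1) (hγ : ∀ t ∈ γ, ∑ᶠ c, t c = k - 1)
    {B : Finset V} (hB : #B = k) :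
    phiFun G S α (phiFun G T γ B) = phiFun G T γ (phiFun G S α B) := by
  have hT_inv : compDist G T B ∈ γ → compDist G S (B ∆ T) = compDist G S B := fun h =>
    compDist_symmDiff_of_sameNbrCut hG h4 hS hT hne
      (card_inter_eq_one_of_finsum_compDist hk hB (hγ _ h))
  have hS_inv : compDist G S B ∈ α → compDist G T (B ∆ S) = compDist G T B := fun h =>
    compDist_symmDiff_of_sameNbrCut hG h4 hT hS hne.symm
      (card_inter_eq_one_of_finsum_compDist hk hB (hα _ h))
  simp only [phiFun, tokenMove, ← Finset.symmDiff_def]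
  by_cases hTc : compDist G T B ∈ γ <;> by_cases hSc : compDist G S B ∈ α <;>
    simp [hTc, hSc, hT_inv, hS_inv, symmDiff_right_comm]

lemma image_phiFun {W : Type*} [DecidableEq W] {G' : SimpleGraph W} {S' : Finset W}
    (f : G ≃g G') (hS : S.image f = S') (e : delComp G S ≃ delComp G' S')
    (he : ∀ (v : V) (hv : v ∈ ((↑S : Set V))ᶜ) (hfv : f v ∈ ((↑S' : Set W))ᶜ),
      e ((G.induce ((↑S : Set V))ᶜ).connectedComponentMk ⟨v, hv⟩)
        = (G'.induce ((↑S' : Set W))ᶜ).connectedComponentMk ⟨f v, hfv⟩)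
    {α : Set (delComp G S → ℕ)} {α' : Set (delComp G' S' → ℕ)} (hα : ∀ t, t ∈ α' ↔ t ∘ e ∈ α)
    (A : Finset V) : (phiFun G S α A).image f = phiFun G' S' α' (A.image f) := by
  have hmem : compDist G' S' (A.image f) ∈ α' ↔ compDist G S A ∈ α := by
    rw [hα, compDist_image f hS e he]
  simp only [phiFun, hmem, tokenMove, ← Finset.symmDiff_def]
  split_ifs
  · rw [image_symmDiff _ _ f.injective, hS]
  · rfl

lemma psiFun_eq_foldr {q : ℕ} (S : Fin q → Finset V) (β : ∀ i, Set (delComp G (S i) → ℕ))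
    (A : Finset V) :
    psiFun G S β A = (List.finRange q).foldr (fun i => phiFun G (S i) (β i)) A := by
  rw [psiFun, List.ofFn_eq_map, List.foldr_comp_id_apply]

end phiFun

/-- `σ` is the permutation of the cuts induced by `f`, `e i` the induced bijection from the
components of `G \ Sᵢ` to those of `G \ S_{σ i}`, and `β'` is `fβ`. -/
theorem iota_psi_comm_general [DecidableEq V] (G : SimpleGraph V)
    (hG : G.Connected) (h4 : IsEmpty (G ≃g SimpleGraph.cycleGraph 4))
    (k : ℕ) (hk1 : 1 ≤ k)
    (q : ℕ) (S : Fin q → Finset V) (hinj : Function.Injective S)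
    (hcut : ∀ i, SameNbrCut G (S i))
    (f : G ≃g G) (σ : Equiv.Perm (Fin q))
    (hσ : ∀ i, Finset.image f (S i) = S (σ i))
    (e : ∀ i, delComp G (S i) ≃ delComp G (S (σ i)))
    (he : ∀ (i : Fin q) (v : V) (hv : v ∈ ((↑(S i) : Set V))ᶜ)
        (hfv : f v ∈ ((↑(S (σ i)) : Set V))ᶜ),
        e i ((G.induce ((↑(S i) : Set V))ᶜ).connectedComponentMk ⟨v, hv⟩)
          = (G.induce ((↑(S (σ i)) : Set V))ᶜ).connectedComponentMk ⟨f v, hfv⟩)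
    (β β' : ∀ i, Set (delComp G (S i) → ℕ)) (hβ : ∀ i, β i ⊆ TS G (S i) k)
    (hβ' : ∀ (i : Fin q) (t : delComp G (S (σ i)) → ℕ),
        t ∈ β' (σ i) ↔ (t ∘ e i) ∈ β i) :
    ∀ A : Finset V, A.card = k →
      Finset.image f (psiFun G S β A) = psiFun G S β' (Finset.image f A) := by
  intro A hA
  have hβ'_sum : ∀ j, ∀ t ∈ β' j, ∑ᶠ c, t c = k - 1 := by
    intro j t ht
    obtain ⟨i, rfl⟩ := σ.surjective j
    rw [← finsum_comp_equiv (e i)]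
    exact (hβ i ((hβ' i t).mp ht)).2
  rw [psiFun_eq_foldr, psiFun_eq_foldr, List.apply_foldr_eq_foldr_map (Finset.image f) σ
    (g' := fun j => phiFun G (S j) (β' j)) (fun i => image_phiFun f (hσ i) (e i) (he i) (hβ' i))]
  refine σ.map_finRange_perm.foldr_eq_of_commute_on (p := fun B => #B = k)
    (fun i B hB => card_phiFun hk1 (hcut i) (hβ'_sum i) hB)
    (fun i j hij B hB => phiFun_comm hG h4 hk1 (hcut i) (hcut j) (hinj.ne hij)
      (hβ'_sum i) (hβ'_sum j) hB) ?_
  rw [card_image_of_injective A f.injective, hA]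

/-- Lemma 2(a): for `f ∈ 𝒮` we have `ι(f) ∘ ψ_β = ψ_{fβ} ∘ ι(f)`.
Here `f` permutes the cuts via `σ`, respects the labels `x i`, maps components of
`G \ Sᵢ` onto components of `G \ S_{σ i}` via `e i`, and `β'` is the family `fβ`,
characterized by `t ∈ β'_{σ i} ↔ t ∘ (e i) ∈ βᵢ`. -/
theorem iota_psi_comm [Fintype V] [DecidableEq V] (G : SimpleGraph V)
    (hG : G.Connected) (h4 : IsEmpty (G ≃g SimpleGraph.cycleGraph 4))
    (k : ℕ) (hk1 : 1 ≤ k) (hk2 : k ≤ Fintype.card V - 1)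
    (q : ℕ) (S : Fin q → Finset V) (hinj : Function.Injective S)
    (hcut : ∀ i, SameNbrCut G (S i))
    (hall : ∀ T : Finset V, SameNbrCut G T → ∃ i, T = S i)
    (x : Fin q → V) (hx : ∀ i, x i ∈ S i)
    (f : G ≃g G) (σ : Equiv.Perm (Fin q))
    (hσ : ∀ i, Finset.image f (S i) = S (σ i))
    (hlab : ∀ i, f (x i) = x (σ i))
    (e : ∀ i, delComp G (S i) ≃ delComp G (S (σ i)))
    (he : ∀ (i : Fin q) (v : V) (hv : v ∈ ((↑(S i) : Set V))ᶜ)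
        (hfv : f v ∈ ((↑(S (σ i)) : Set V))ᶜ),
        e i ((G.induce ((↑(S i) : Set V))ᶜ).connectedComponentMk ⟨v, hv⟩)
          = (G.induce ((↑(S (σ i)) : Set V))ᶜ).connectedComponentMk ⟨f v, hfv⟩)
    (β β' : ∀ i, Set (delComp G (S i) → ℕ)) (hβ : ∀ i, β i ⊆ TS G (S i) k)
    (hβ' : ∀ (i : Fin q) (t : delComp G (S (σ i)) → ℕ),
        t ∈ β' (σ i) ↔ (t ∘ e i) ∈ β i) :
    ∀ A : Finset V, A.card = k →
      Finset.image f (psiFun G S β A) = psiFun G S β' (Finset.image f A) :=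
  iota_psi_comm_general G hG h4 k hk1 q S hinj hcut f σ hσ e he β β' hβ hβ'
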